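/- Let α : ℝ³ → ℝ³ be α(x,y,z) = (x, y, z + xy/2), and let Ω_ω be the Euclidean rotation Ω_ω(x,y,z) = (x·cosω − y·sinω, x·sinω + y·cosω, z). Then the Nil rotation M_ω(x,y,z) = (x·cosω − y·sinω, x·sinω + y·cosω, z − (1/2)xy + (1/4)(x² − y²)sin(2ω) + (1/2)xy·cos(2ω)) satisfies M_ω = α ∘ Ω_ω ∘ α⁻¹, where α⁻¹(x,y,z) = (x, y, z − xy/2). -/

import Mathlib

noncomputable def nilRot (ω : ℝ) (p : ℝ × ℝ × ℝ) : ℝ × ℝ × ℝ :=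
  (p.1 * Real.cos ω - p.2.1 * Real.sin ω,
   p.1 * Real.sin ω + p.2.1 * Real.cos ω,
   p.2.2 - (1 / 2) * p.1 * p.2.1 + (1 / 4) * (p.1 ^ 2 - p.2.1 ^ 2) * Real.sin (2 * ω) +
     (1 / 2) * p.1 * p.2.1 * Real.cos (2 * ω))

noncomputable def alphaMap (p : ℝ × ℝ × ℝ) : ℝ × ℝ × ℝ := (p.1, p.2.1, p.2.2 + p.1 * p.2.1 / 2)

noncomputable def alphaInv (p : ℝ × ℝ × ℝ) : ℝ × ℝ × ℝ := (p.1, p.2.1, p.2.2 - p.1 * p.2.1 / 2)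

noncomputable def eucRot (ω : ℝ) (p : ℝ × ℝ × ℝ) : ℝ × ℝ × ℝ :=
  (p.1 * Real.cos ω - p.2.1 * Real.sin ω, p.1 * Real.sin ω + p.2.1 * Real.cos ω, p.2.2)

open Real

/-- How the shear term `xy` of `alphaMap` transforms under a rotation; this produces the
double-angle terms of `nilRot`. -/
theorem rotate_fst_mul_rotate_snd (x y ω : ℝ) :
    (x * cos ω - y * sin ω) * (x * sin ω + y * cos ω) =
      (1 / 2) * (x ^ 2 - y ^ 2) * sin (2 * ω) + x * y * cos (2 * ω) := by
  rw [sin_two_mul, cos_two_mul']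
  ring

theorem nil_rotation_conjugate (ω : ℝ) :
    nilRot ω = alphaMap ∘ eucRot ω ∘ alphaInv := by
  funext ⟨x, y, z⟩
  refine Prod.ext rfl (Prod.ext rfl ?_)
  simp only [nilRot, alphaMap, alphaInv, eucRot, Function.comp_apply]
  rw [mul_div_assoc, rotate_fst_mul_rotate_snd]
  ring
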